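/- Let v^1,…,v^R ∈ ℝ^{m×n} with v^1,…,v^s of rank 1, U = span{v^1,…,v^R}, and let M be the matrix with columns indexed by Ω = {(i,j) : 1 ≤ i < j ≤ R or s < i = j ≤ R} and rows indexed by (a,b,c,d) with 1 ≤ a < c ≤ m, 1 ≤ b < d ≤ n, whose entries are M_{abcd,(i,j)} = ⟨v^i ∨ v^j, E_{abcd}⟩. If the columns of M are linearly independent, then S²(U) ∩ (span{E_{abcd}})^⊥ ⊆ span{(v^1)^{⊗2}, …, (v^s)^{⊗2}}. -/

import Mathlib

open Matrix

noncomputable section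

/-- The tensor space `ℝ^{m×n} ⊗ ℝ^{m×n}`, with the standard (Frobenius-type)
inner product satisfying `⟨a ⊗ b, c ⊗ d⟩ = ⟨a,c⟩⟨b,d⟩`. -/
abbrev Tens (m n : ℕ) := EuclideanSpace ℝ ((Fin m × Fin n) × (Fin m × Fin n))

/-- The tensor product `u ⊗ u'` of two `m × n` matrices. -/
def tens {m n : ℕ} (u u' : Matrix (Fin m) (Fin n) ℝ) : Tens m n :=
  WithLp.toLp 2 (fun p => u p.1.1 p.1.2 * u' p.2.1 p.2.2)

/-- The symmetric 2-tensor `u ∨ u' := (1/2)(u ⊗ u' + u' ⊗ u)`. -/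
def vee {m n : ℕ} (u u' : Matrix (Fin m) (Fin n) ℝ) : Tens m n :=
  (1 / 2 : ℝ) • (tens u u' + tens u' u)

/-- `E_{abcd} := e_{ab} ∨ e_{cd} − e_{ad} ∨ e_{cb}` where `e_{αβ}` are matrix units. -/
def Emat {m n : ℕ} (a c : Fin m) (b d : Fin n) : Tens m n :=
  vee (single a b 1) (single c d 1)
    - vee (single a d 1) (single c b 1)

/-- `S²(U) := span{u ∨ u' : u, u' ∈ U}`. -/
def S2 {m n : ℕ} (U : Submodule ℝ (Matrix (Fin m) (Fin n) ℝ)) : Submodule ℝ (Tens m n) :=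
  Submodule.span ℝ {T | ∃ u ∈ U, ∃ u' ∈ U, T = vee u u'}

/-- `span{E_{abcd} : 1 ≤ a < c ≤ m, 1 ≤ b < d ≤ n}`. -/
def Espan (m n : ℕ) : Submodule ℝ (Tens m n) :=
  Submodule.span ℝ {T | ∃ a c : Fin m, ∃ b d : Fin n, a < c ∧ b < d ∧ T = Emat a c b d}

/-! Write `Ω` for the index set of the columns of `M`. Up to symmetry, every generator
`v^i ∨ v^j` of `S²(U)` is either some `v^i ∨ v^j` with `(i, j) ∈ Ω` or a square `(v^i)^{⊗2}`
with `i < s`, so `T ∈ S²(U)` splits as `T = A + B` with `A` in the span of the former and `B` in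
the span of the latter. Squares of rank-one matrices are orthogonal to every `E_{abcd}` (the
pairing is a `2 × 2` minor), so `T ⊥ E_{abcd}` for all `a < c`, `b < d` gives `A ⊥ E_{abcd}`.
Writing `A = ∑_{p ∈ Ω} d_p (v^{p₁} ∨ v^{p₂})`, this says `M d = 0`, hence `d = 0` and `T = B`. -/

open Submodule Set

theorem eq_zero_of_mem_span_of_linearIndependent_inner {ι κ E : Type*} [Fintype ι]
    [NormedAddCommGroup E] [InnerProductSpace ℝ E] {w : ι → E} {e : κ → E}
    (hw : LinearIndependent ℝ fun i k => (inner ℝ (w i) (e k) : ℝ))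
    {x : E} (hx : x ∈ span ℝ (range w)) (hxe : ∀ k, (inner ℝ x (e k) : ℝ) = 0) : x = 0 := by
  obtain ⟨c, rfl⟩ := (mem_span_range_iff_exists_fun ℝ).1 hx
  have hc : c = 0 := funext <| Fintype.linearIndependent_iff.1 hw c <| funext fun k => by
    simpa [sum_inner, real_inner_smul_left] using hxe k
  simp [hc]

variable {m n : ℕ}

def tensL : Matrix (Fin m) (Fin n) ℝ →ₗ[ℝ] Matrix (Fin m) (Fin n) ℝ →ₗ[ℝ] Tens m n :=
  LinearMap.mk₂ ℝ tens
    (fun _ _ _ => by ext; simp [tens, add_mul])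
    (fun _ _ _ => by ext; simp [tens, mul_assoc])
    (fun _ _ _ => by ext; simp [tens, mul_add])
    (fun _ _ _ => by ext; simp [tens, mul_left_comm])

def veeL : Matrix (Fin m) (Fin n) ℝ →ₗ[ℝ] Matrix (Fin m) (Fin n) ℝ →ₗ[ℝ] Tens m n :=
  (1 / 2 : ℝ) • (tensL + tensL.flip)

theorem vee_comm (u u' : Matrix (Fin m) (Fin n) ℝ) : vee u u' = vee u' u := by
  rw [vee, vee, add_comm]

theorem vee_self (u : Matrix (Fin m) (Fin n) ℝ) : vee u u = tens u u := by
  rw [vee, ← two_smul ℝ, smul_smul]; norm_num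

theorem S2_span_range_le {ι : Type*} (v : ι → Matrix (Fin m) (Fin n) ℝ) :
    S2 (span ℝ (range v)) ≤ span ℝ (range fun p : ι × ι => vee (v p.1) (v p.2)) := by
  have hmap₂ : map₂ veeL (span ℝ (range v)) (span ℝ (range v)) =
      span ℝ (range fun p : ι × ι => vee (v p.1) (v p.2)) := by
    rw [map₂_span_span, image2_range]; rfl
  rw [← hmap₂]
  refine span_le.2 ?_
  rintro _ ⟨u, hu, u', hu', rfl⟩
  exact apply_mem_map₂ veeL hu hu'

theorem inner_tens_tens_single (u u' : Matrix (Fin m) (Fin n) ℝ) (a c : Fin m) (b d : Fin n) :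
    (inner ℝ (tens u u') (tens (single a b 1) (single c d 1)) : ℝ) = u a b * u' c d := by
  simp [PiLp.inner_apply, tens, Fintype.sum_prod_type, single_apply, ite_and]

theorem inner_tens_self_Emat (u : Matrix (Fin m) (Fin n) ℝ) (a c : Fin m) (b d : Fin n) :
    (inner ℝ (tens u u) (Emat a c b d) : ℝ) = u a b * u c d - u a d * u c b := by
  simp only [Emat, vee, inner_sub_right, real_inner_smul_right, inner_add_right,
    inner_tens_tens_single]
  ring

theorem inner_tens_vecMulVec_Emat (x : Fin m → ℝ) (y : Fin n → ℝ) (a c : Fin m) (b d : Fin n) :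
    (inner ℝ (tens (vecMulVec x y) (vecMulVec x y)) (Emat a c b d) : ℝ) = 0 := by
  rw [inner_tens_self_Emat]; simp only [vecMulVec_apply]; ring

theorem span_tens_self_le_orthogonal_Espan {ι : Type*} (w : ι → Matrix (Fin m) (Fin n) ℝ)
    (hw : ∀ i, ∃ (x : Fin m → ℝ) (y : Fin n → ℝ), w i = vecMulVec x y) :
    span ℝ (range fun i => tens (w i) (w i)) ≤ (Espan m n)ᗮ := by
  rw [Espan, ← isOrtho_iff_le, isOrtho_span]
  rintro _ ⟨i, rfl⟩ _ ⟨a, c, b, d, -, -, rfl⟩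
  obtain ⟨x, y, hxy⟩ := hw i
  simp only [hxy, inner_tens_vecMulVec_Emat]

theorem vee_mem_span_sup_span_tens_self {R s : ℕ} (hsR : s ≤ R)
    (v : Fin R → Matrix (Fin m) (Fin n) ℝ) (i j : Fin R) :
    vee (v i) (v j) ∈
      span ℝ (range fun p : {p : Fin R × Fin R // p.1 < p.2 ∨ (p.1 = p.2 ∧ s ≤ (p.1 : ℕ))} =>
        vee (v p.1.1) (v p.1.2)) ⊔
      span ℝ (range fun k : Fin s => tens (v (Fin.castLE hsR k)) (v (Fin.castLE hsR k))) := by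
  rcases lt_trichotomy i j with hij | rfl | hji
  · exact mem_sup_left (subset_span ⟨⟨(i, j), .inl hij⟩, rfl⟩)
  · by_cases hi : s ≤ (i : ℕ)
    · exact mem_sup_left (subset_span ⟨⟨(i, i), .inr ⟨rfl, hi⟩⟩, rfl⟩)
    · refine mem_sup_right (subset_span ⟨⟨i, not_le.1 hi⟩, ?_⟩)
      simp [vee_self]
  · rw [vee_comm]
    exact mem_sup_left (subset_span ⟨⟨(j, i), .inl hji⟩, rfl⟩)

/-- If the columns of `M` (indexed by `Ω = {(i,j) : i < j, or i = j with s < i}`, rows indexed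
by `(a,b,c,d)` with `a < c`, `b < d`) are linearly independent, then
`S²(U) ∩ (span{E_{abcd}})ᗮ ⊆ span{(v^1)^{⊗2}, …, (v^s)^{⊗2}}`. -/
theorem stmt_6 {m n R s : ℕ} (hsR : s ≤ R) (v : Fin R → Matrix (Fin m) (Fin n) ℝ)
    (hrank : ∀ i : Fin R, (i : ℕ) < s → ∃ (x : Fin m → ℝ) (y : Fin n → ℝ), v i = vecMulVec x y)
    (U : Submodule ℝ (Matrix (Fin m) (Fin n) ℝ)) (hU : U = Submodule.span ℝ (Set.range v))
    (hM : LinearIndependent ℝ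
      (fun p : {p : Fin R × Fin R // p.1 < p.2 ∨ (p.1 = p.2 ∧ s ≤ (p.1 : ℕ))} =>
        fun q : {q : (Fin m × Fin m) × (Fin n × Fin n) // q.1.1 < q.1.2 ∧ q.2.1 < q.2.2} =>
          (inner ℝ (vee (v p.1.1) (v p.1.2)) (Emat q.1.1.1 q.1.1.2 q.1.2.1 q.1.2.2) : ℝ))) :
    S2 U ⊓ (Espan m n)ᗮ ≤
      Submodule.span ℝ
        (Set.range fun i : Fin s => tens (v (Fin.castLE hsR i)) (v (Fin.castLE hsR i))) := by
  rintro T ⟨hTS2, hTperp⟩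
  subst hU
  obtain ⟨A, hA, B, hB, rfl⟩ := mem_sup.1 <|
    (S2_span_range_le v).trans (span_le.2 <| range_subset_iff.2 fun p =>
      vee_mem_span_sup_span_tens_self hsR v p.1 p.2) hTS2
  have hBperp : B ∈ (Espan m n)ᗮ :=
    span_tens_self_le_orthogonal_Espan _ (fun k => hrank _ k.2) hB
  have hAperp : A ∈ (Espan m n)ᗮ := (Submodule.add_mem_iff_left _ hBperp).1 hTperp
  have hA0 : A = 0 := eq_zero_of_mem_span_of_linearIndependent_inner hM hA fun q =>
    inner_left_of_mem_orthogonal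
      (subset_span ⟨_, _, _, _, q.2.1, q.2.2, rfl⟩ : Emat _ _ _ _ ∈ Espan m n) hAperp
  simpa [hA0] using hB
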